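/- arXiv:2403.12775 — 5 statements merged into one kernel-verified Lean document; each statement's English description precedes it below -/
import Mathlib

section
/- Let $r \geq 2$ be an integer, $\delta > 0$, and let $\beta : \mathbb{N} \to \mathbb{R}$ satisfy the recursion $\beta(t+1) = (1+\delta)\frac{\beta(t)^r}{r} + \beta(0)$ for all $t \geq 0$. Suppose $x_0 > 0$ satisfies $x_0 = (1+\delta)\frac{x_0^r}{r} + \beta(0)$, and $0 < \xi < 1$. If $0 \leq \beta(0) \leq \beta(t) \leq (1-\xi)x_0$, then $\beta(t+1) \leq (1-\xi')x_0$ where $\xi' = \xi(1-(1-\xi)^r)$, and moreover $0 < \xi' < 1$. -/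
section ContractionFactor

variable {ξ : ℝ} {r : ℕ}

lemma mul_one_sub_one_sub_pow_pos (hξ0 : 0 < ξ) (hξ1 : ξ < 1) (hr : r ≠ 0) :
    0 < ξ * (1 - (1 - ξ) ^ r) :=
  mul_pos hξ0 (sub_pos.2 (pow_lt_one₀ (by linarith) (by linarith) hr))

lemma mul_one_sub_one_sub_pow_lt_one (hξ0 : 0 ≤ ξ) (hξ1 : ξ < 1) :
    ξ * (1 - (1 - ξ) ^ r) < 1 := by
  have hpow : 0 ≤ (1 - ξ) ^ r := pow_nonneg (by linarith) r
  nlinarith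

end ContractionFactor

lemma mul_pow_add_le_of_le_mul_fixedPoint {a b x₀ y ξ : ℝ} {r : ℕ} (ha : 0 ≤ a)
    (hfix : x₀ = a * x₀ ^ r + b) (hb : 0 ≤ b) (hby : b ≤ y) (hy : y ≤ (1 - ξ) * x₀)
    (hξ0 : 0 ≤ ξ) (hξ1 : ξ ≤ 1) :
    a * y ^ r + b ≤ (1 - ξ * (1 - (1 - ξ) ^ r)) * x₀ := by
  have hpow : (1 - ξ) ^ r ≤ 1 := pow_le_one₀ (by linarith) (by linarith)
  have hscaled : a * y ^ r + b ≤ (1 - ξ) ^ r * (x₀ - b) + b := by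
    have : a * y ^ r ≤ a * ((1 - ξ) * x₀) ^ r := by gcongr; linarith
    have hax : a * x₀ ^ r = x₀ - b := by linarith
    rw [mul_pow, mul_left_comm, hax] at this
    linarith
  -- `b ≤ (1 - ξ) * x₀`, and the bound is affine in `b` with slope `1 - (1 - ξ) ^ r ≥ 0`.
  nlinarith [mul_le_mul_of_nonneg_left (hby.trans hy) (sub_nonneg.2 hpow)]

theorem stmt_0_general (r : ℕ) (hr : 2 ≤ r) (δ : ℝ) (hδ : 0 < δ) (β : ℕ → ℝ)
    (hrec : ∀ t, β (t + 1) = (1 + δ) * (β t) ^ r / r + β 0)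
    (x0 : ℝ) (hfix : x0 = (1 + δ) * x0 ^ r / r + β 0)
    (ξ : ℝ) (hξ0 : 0 < ξ) (hξ1 : ξ < 1) (t : ℕ)
    (hβ0 : 0 ≤ β 0) (h0t : β 0 ≤ β t) (ht : β t ≤ (1 - ξ) * x0) :
    β (t + 1) ≤ (1 - ξ * (1 - (1 - ξ) ^ r)) * x0 ∧
      0 < ξ * (1 - (1 - ξ) ^ r) ∧ ξ * (1 - (1 - ξ) ^ r) < 1 := by
  have hdiv : ∀ y : ℝ, (1 + δ) * y ^ r / r = (1 + δ) / r * y ^ r := fun y => by ring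
  rw [hdiv] at hfix
  refine ⟨?_, mul_one_sub_one_sub_pow_pos hξ0 hξ1 (by omega),
    mul_one_sub_one_sub_pow_lt_one hξ0.le hξ1⟩
  rw [hrec, hdiv]
  exact mul_pow_add_le_of_le_mul_fixedPoint (by positivity) hfix hβ0 h0t ht hξ0.le hξ1.le

theorem stmt_0 (r : ℕ) (hr : 2 ≤ r) (δ : ℝ) (hδ : 0 < δ) (β : ℕ → ℝ)
    (hrec : ∀ t, β (t + 1) = (1 + δ) * (β t) ^ r / r + β 0)
    (x0 : ℝ) (hx0 : 0 < x0) (hfix : x0 = (1 + δ) * x0 ^ r / r + β 0)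
    (ξ : ℝ) (hξ0 : 0 < ξ) (hξ1 : ξ < 1) (t : ℕ)
    (hβ0 : 0 ≤ β 0) (h0t : β 0 ≤ β t) (ht : β t ≤ (1 - ξ) * x0) :
    β (t + 1) ≤ (1 - ξ * (1 - (1 - ξ) ^ r)) * x0 ∧
      0 < ξ * (1 - (1 - ξ) ^ r) ∧ ξ * (1 - (1 - ξ) ^ r) < 1 :=
  stmt_0_general r hr δ hδ β hrec x0 hfix ξ hξ0 hξ1 t hβ0 h0t ht
end

section
/- Define $g(x) = (e^x - 1 - x)/x^2$ for $x \neq 0$ and $g(0) = 1/2$. Then $g$ is monotone increasing on $\mathbb{R}$. -/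
private lemma hp_nonneg (x : ℝ) : 0 ≤ (x - 1) * Real.exp x + 1 := by
  have h1 : -x + 1 ≤ Real.exp (-x) := Real.add_one_le_exp (-x)
  have h2 : Real.exp (-x) * Real.exp x = 1 := by
    rw [← Real.exp_add]; simp
  nlinarith [Real.exp_pos x, Real.exp_pos (-x)]

private lemma h_hasDeriv (x : ℝ) :
    HasDerivAt (fun x : ℝ => (x - 2) * Real.exp x + x + 2) ((x - 1) * Real.exp x + 1) x := by
  have h1 : HasDerivAt (fun x : ℝ => (x - 2) * Real.exp x)
      (1 * Real.exp x + (x - 2) * Real.exp x) x :=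
    ((hasDerivAt_id x).sub_const 2).mul (Real.hasDerivAt_exp x)
  have h2 : HasDerivAt (fun x : ℝ => (x - 2) * Real.exp x + x + 2)
      (1 * Real.exp x + (x - 2) * Real.exp x + 1) x := (h1.add (hasDerivAt_id x)).add_const 2
  convert h2 using 1
  ring

private lemma h_mono : Monotone (fun x : ℝ => (x - 2) * Real.exp x + x + 2) := by
  apply monotone_of_deriv_nonneg
  · exact fun x => (h_hasDeriv x).differentiableAt
  · intro x
    rw [(h_hasDeriv x).deriv]
    exact hp_nonneg x

private lemma num_nonneg (x : ℝ) : 0 ≤ x * ((x - 2) * Real.exp x + x + 2) := by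
  have h0 : (fun x : ℝ => (x - 2) * Real.exp x + x + 2) 0 = 0 := by simp
  rcases le_or_gt 0 x with hx | hx
  · have := h_mono (show (0:ℝ) ≤ x from hx)
    rw [h0] at this
    simp only at this
    exact mul_nonneg hx this
  · have := h_mono (show x ≤ (0:ℝ) from hx.le)
    rw [h0] at this
    simp only at this
    nlinarith

private lemma f_hasDeriv {x : ℝ} (hx : x ≠ 0) :
    HasDerivAt (fun x : ℝ => (Real.exp x - 1 - x) / x ^ 2)
      (((Real.exp x - 1) * x ^ 2 - (Real.exp x - 1 - x) * (2 * x)) / (x ^ 2) ^ 2) x := by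
  have hnum : HasDerivAt (fun x : ℝ => Real.exp x - 1 - x) (Real.exp x - 1) x := by
    exact ((Real.hasDerivAt_exp x).sub_const 1).sub (hasDerivAt_id x)
  have hden : HasDerivAt (fun x : ℝ => x ^ 2) (2 * x) x := by
    simpa using hasDerivAt_pow 2 x
  exact hnum.div hden (pow_ne_zero 2 hx)

private lemma f_deriv_nonneg {x : ℝ} (hx : x ≠ 0) :
    0 ≤ ((Real.exp x - 1) * x ^ 2 - (Real.exp x - 1 - x) * (2 * x)) / (x ^ 2) ^ 2 := by
  apply div_nonneg
  · have := num_nonneg x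
    nlinarith [this]
  · positivity

private lemma f_monoOn_Ioi :
    MonotoneOn (fun x : ℝ => (Real.exp x - 1 - x) / x ^ 2) (Set.Ioi 0) := by
  apply monotoneOn_of_deriv_nonneg (convex_Ioi 0)
  · intro x hx
    exact (f_hasDeriv (ne_of_gt hx)).continuousAt.continuousWithinAt
  · intro x hx
    rw [interior_Ioi] at hx
    exact (f_hasDeriv (ne_of_gt hx)).differentiableAt.differentiableWithinAt
  · intro x hx
    rw [interior_Ioi] at hx
    rw [(f_hasDeriv (ne_of_gt hx)).deriv]
    exact f_deriv_nonneg (ne_of_gt hx)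

private lemma f_monoOn_Iio :
    MonotoneOn (fun x : ℝ => (Real.exp x - 1 - x) / x ^ 2) (Set.Iio 0) := by
  apply monotoneOn_of_deriv_nonneg (convex_Iio 0)
  · intro x hx
    exact (f_hasDeriv (ne_of_lt hx)).continuousAt.continuousWithinAt
  · intro x hx
    rw [interior_Iio] at hx
    exact (f_hasDeriv (ne_of_lt hx)).differentiableAt.differentiableWithinAt
  · intro x hx
    rw [interior_Iio] at hx
    rw [(f_hasDeriv (ne_of_lt hx)).deriv]
    exact f_deriv_nonneg (ne_of_lt hx)

private lemma phi_mono : Monotone (fun x : ℝ => Real.exp x - 1 - x - x ^ 2 / 2) := by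
  apply monotone_of_deriv_nonneg
  · fun_prop
  · intro x
    have h : HasDerivAt (fun x : ℝ => Real.exp x - 1 - x - x ^ 2 / 2)
        (Real.exp x - 1 - x) x := by
      have h1 : HasDerivAt (fun x : ℝ => Real.exp x - 1 - x) (Real.exp x - 1) x := by
        exact ((Real.hasDerivAt_exp x).sub_const 1).sub (hasDerivAt_id x)
      have h2 : HasDerivAt (fun x : ℝ => x ^ 2 / 2) (2 * x / 2) x := by
        simpa using (hasDerivAt_pow 2 x).div_const 2
      have h3 : HasDerivAt (fun x : ℝ => Real.exp x - 1 - x - x ^ 2 / 2)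
          (Real.exp x - 1 - 2 * x / 2) x := h1.sub h2
      convert h3 using 1
      ring
    rw [h.deriv]
    nlinarith [Real.add_one_le_exp x]

private lemma f_le_half {x : ℝ} (hx : x < 0) : (Real.exp x - 1 - x) / x ^ 2 ≤ 1 / 2 := by
  have h := phi_mono (show x ≤ (0:ℝ) from hx.le)
  simp only at h
  norm_num at h
  rw [div_le_iff₀ (by nlinarith : (0:ℝ) < x ^ 2)]
  nlinarith

private lemma half_le_f {x : ℝ} (hx : 0 < x) : 1 / 2 ≤ (Real.exp x - 1 - x) / x ^ 2 := by
  have h := phi_mono (show (0:ℝ) ≤ x from hx.le)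
  simp only at h
  norm_num at h
  rw [le_div_iff₀ (by positivity : (0:ℝ) < x ^ 2)]
  nlinarith

theorem stmt_3 (g : ℝ → ℝ) (hg : ∀ x : ℝ, x ≠ 0 → g x = (Real.exp x - 1 - x) / x ^ 2)
    (hg0 : g 0 = 1 / 2) : Monotone g := by
  intro a b hab
  rcases lt_trichotomy a 0 with ha | ha | ha
  · rcases lt_trichotomy b 0 with hb | hb | hb
    · rw [hg a (ne_of_lt ha), hg b (ne_of_lt hb)]
      exact f_monoOn_Iio ha hb hab
    · rw [hg a (ne_of_lt ha), hb, hg0]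
      exact f_le_half ha
    · rw [hg a (ne_of_lt ha), hg b (ne_of_gt hb)]
      exact le_trans (f_le_half ha) (half_le_f hb)
  · rcases lt_or_eq_of_le (ha ▸ hab : (0:ℝ) ≤ b) with hb | hb
    · rw [ha, hg0, hg b (ne_of_gt hb)]
      exact half_le_f hb
    · rw [ha, ← hb]
  · have hb : 0 < b := lt_of_lt_of_le ha hab
    rw [hg a (ne_of_gt ha), hg b (ne_of_gt hb)]
    exact f_monoOn_Ioi ha hb hab
end

section
/- Let $g(x) = (e^x - 1 - x)/x^2$ for $x \neq 0$, extended by $g(0) = 1/2$. If $X$ is a real-valued random variable with $\mathbb{E}[X] = 0$ and $X \leq b$ almost surely (for some real $b$), then $\mathbb{E}[e^X] \leq e^{g(b)\,\mathrm{Var}(X)}$. -/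
open MeasureTheory ProbabilityTheory

noncomputable def Gg (x : ℝ) : ℝ := ∫ t in (0:ℝ)..1, (1 - t) * Real.exp (t * x)

lemma Gg_eq (x : ℝ) (hx : x ≠ 0) : Gg x = (Real.exp x - 1 - x) / x ^ 2 := by
  have h : ∀ t ∈ Set.uIcc (0:ℝ) 1,
      HasDerivAt (fun t => (1 - t) * Real.exp (t * x) / x + Real.exp (t * x) / x ^ 2)
        ((1 - t) * Real.exp (t * x)) t := by
    intro t _
    have h1 : HasDerivAt (fun t : ℝ => t * x) x t := by
      simpa using (hasDerivAt_id t).mul_const x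
    have h2 : HasDerivAt (fun t : ℝ => Real.exp (t * x)) (Real.exp (t * x) * x) t :=
      h1.exp
    have h3 : HasDerivAt (fun t : ℝ => (1 - t)) (-1 : ℝ) t := by
      simpa using (hasDerivAt_id t).const_sub 1
    have h4 := (h3.mul h2).div_const x
    have h5 := h2.div_const (x ^ 2)
    have := h4.add h5
    refine this.congr_deriv ?_
    field_simp
    ring
  have hcont : IntervalIntegrable (fun t => (1 - t) * Real.exp (t * x)) MeasureTheory.volume 0 1 :=
    (Continuous.mul (by continuity) (by continuity)).intervalIntegrable 0 1
  have := intervalIntegral.integral_eq_sub_of_hasDerivAt h hcont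
  rw [Gg, this]
  field_simp
  simp only [mul_zero, Real.exp_zero]
  ring

lemma Gg_zero : Gg 0 = 1 / 2 := by
  have h : ∀ t ∈ Set.uIcc (0:ℝ) 1,
      HasDerivAt (fun t : ℝ => t - t ^ 2 / 2) ((1 - t) * Real.exp (t * 0)) t := by
    intro t _
    have h1 : HasDerivAt (fun t : ℝ => t - t ^ 2 / 2) (1 - t) t := by
      have := ((hasDerivAt_pow 2 t).div_const 2).const_sub 0
      have h2 := (hasDerivAt_id t).sub ((hasDerivAt_pow 2 t).div_const 2)
      refine h2.congr_deriv ?_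
      norm_num
    simpa using h1
  have hcont : IntervalIntegrable (fun t : ℝ => (1 - t) * Real.exp (t * 0)) MeasureTheory.volume 0 1 :=
    (Continuous.mul (by continuity) (by continuity)).intervalIntegrable 0 1
  have := intervalIntegral.integral_eq_sub_of_hasDerivAt h hcont
  rw [Gg, this]
  norm_num

lemma Gg_mono {x b : ℝ} (hxb : x ≤ b) : Gg x ≤ Gg b := by
  apply intervalIntegral.integral_mono_on zero_le_one
  · exact (Continuous.mul (by continuity) (by continuity)).intervalIntegrable 0 1
  · exact (Continuous.mul (by continuity) (by continuity)).intervalIntegrable 0 1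
  · intro t ht
    have ht0 : (0:ℝ) ≤ t := ht.1
    have ht1 : t ≤ 1 := ht.2
    have : t * x ≤ t * b := mul_le_mul_of_nonneg_left hxb ht0
    exact mul_le_mul_of_nonneg_left (Real.exp_le_exp.2 this) (by linarith)

lemma exp_key {x b : ℝ} (hxb : x ≤ b) : Real.exp x ≤ 1 + x + Gg b * x ^ 2 := by
  have hx : Real.exp x = 1 + x + x ^ 2 * Gg x := by
    rcases eq_or_ne x 0 with rfl | hx0
    · simp
    · rw [Gg_eq x hx0]
      field_simp
      ring
  rw [hx]
  have : x ^ 2 * Gg x ≤ x ^ 2 * Gg b := mul_le_mul_of_nonneg_left (Gg_mono hxb) (sq_nonneg x)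
  linarith

theorem stmt_4 {Ω : Type*} {m0 : MeasurableSpace Ω} (μ : Measure Ω) [IsProbabilityMeasure μ]
    (X : Ω → ℝ) (hXmeas : Measurable X) (hX2 : MemLp X 2 μ)
    (hexp : Integrable (fun ω => Real.exp (X ω)) μ)
    (hmean : ∫ ω, X ω ∂μ = 0) (b : ℝ) (hb : ∀ᵐ ω ∂μ, X ω ≤ b)
    (g : ℝ → ℝ) (hg : ∀ x : ℝ, x ≠ 0 → g x = (Real.exp x - 1 - x) / x ^ 2)
    (hg0 : g 0 = 1 / 2) :
    ∫ ω, Real.exp (X ω) ∂μ ≤ Real.exp (g b * variance X μ) := by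
  have hgG : g b = Gg b := by
    rcases eq_or_ne b 0 with rfl | hb0
    · rw [hg0, Gg_zero]
    · rw [hg b hb0, Gg_eq b hb0]
  have hXint : Integrable X μ := hX2.integrable one_le_two
  have hX2int : Integrable (fun ω => X ω ^ 2) μ := by
    have := hX2.integrable_sq
    simpa [sq] using this
  have hvar : variance X μ = ∫ ω, X ω ^ 2 ∂μ := by
    rw [variance_eq_sub hX2, hmean]
    simp [Pi.pow_apply]
  have hle : ∀ᵐ ω ∂μ, Real.exp (X ω) ≤ 1 + X ω + Gg b * X ω ^ 2 :=
    hb.mono fun ω hω => exp_key hω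
  have hrhsint : Integrable (fun ω => 1 + X ω + Gg b * X ω ^ 2) μ :=
    ((integrable_const 1).add hXint).add (hX2int.const_mul _)
  have h1 : ∫ ω, Real.exp (X ω) ∂μ ≤ ∫ ω, (1 + X ω + Gg b * X ω ^ 2) ∂μ :=
    integral_mono_ae hexp hrhsint hle
  have h2 : ∫ ω, (1 + X ω + Gg b * X ω ^ 2) ∂μ
      = 1 + Gg b * ∫ ω, X ω ^ 2 ∂μ := by
    have e1 : ∫ ω, (1 + X ω + Gg b * X ω ^ 2) ∂μ
        = (∫ ω, (1 + X ω) ∂μ) + ∫ ω, Gg b * X ω ^ 2 ∂μ :=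
      integral_add (μ := μ) (f := fun ω => 1 + X ω) (g := fun ω => Gg b * X ω ^ 2)
        ((integrable_const 1).add hXint) (hX2int.const_mul _)
    have e2 : ∫ ω, (1 + X ω) ∂μ = (∫ ω, (1:ℝ) ∂μ) + ∫ ω, X ω ∂μ :=
      integral_add (μ := μ) (f := fun _ => (1:ℝ)) (g := X) (integrable_const 1) hXint
    rw [e1, e2, integral_const_mul, hmean, integral_const]
    simp
  have h3 : Gg b * ∫ ω, X ω ^ 2 ∂μ + 1 ≤ Real.exp (Gg b * ∫ ω, X ω ^ 2 ∂μ) :=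
    Real.add_one_le_exp _
  rw [hgG, hvar]
  linarith
end

section
/- Let $X_1, \ldots, X_n$ be (not necessarily independent) Bernoulli random variables, $\lambda > 0$ a constant, and $\widehat{X}_1, \ldots, \widehat{X}_n$ independent Bernoulli random variables such that for every subset $I \subseteq \{1,\ldots,n\}$, $\mathbb{E}[\prod_{i \in I} X_i] \leq \lambda \mathbb{E}[\prod_{i \in I} \widehat{X}_i]$. Set $X = \sum_{i=1}^n X_i$ and $\widehat{X} = \sum_{i=1}^n \widehat{X}_i$. Then for all $\vartheta \geq 0$, $\mathbb{P}[X \geq \mathbb{E}[\widehat{X}] + \vartheta] \leq \lambda \exp\left(-\frac{\vartheta^2}{2(\mathrm{Var}(\widehat{X}) + \vartheta/3)}\right)$. -/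
open MeasureTheory ProbabilityTheory

lemma exp_sub_linear (y : ℝ) :
    Real.exp y - 1 - y = ∑' n : ℕ, y ^ (n + 2) / (n + 2).factorial := by
  have hs := Real.summable_pow_div_factorial y
  have h := Summable.sum_add_tsum_nat_add 2 hs
  have hexp : Real.exp y = ∑' n : ℕ, y ^ n / n.factorial := by
    rw [Real.exp_eq_exp_ℝ, NormedSpace.exp_eq_tsum_div]
  rw [hexp, ← h]
  simp [Finset.sum_range_succ]
  ring

lemma key1 (t x : ℝ) (ht : 0 ≤ t) (hx : |x| ≤ 1) :
    Real.exp (t * x) ≤ 1 + t * x + x ^ 2 * (Real.exp t - 1 - t) := by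
  have h1 := exp_sub_linear (t * x)
  have h2 := exp_sub_linear t
  have hx2 : ∀ n : ℕ, x ^ (n + 2) ≤ x ^ 2 := by
    intro n
    calc x ^ (n + 2) ≤ |x ^ (n + 2)| := le_abs_self _
      _ = |x| ^ n * |x| ^ 2 := by rw [abs_pow, pow_add]
      _ ≤ 1 * x ^ 2 := by
          rw [sq_abs]
          exact mul_le_mul_of_nonneg_right (pow_le_one₀ (abs_nonneg x) hx) (sq_nonneg x)
      _ = x ^ 2 := one_mul _
  have hle : ∑' n : ℕ, (t * x) ^ (n + 2) / (n + 2).factorial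
      ≤ ∑' n : ℕ, x ^ 2 * (t ^ (n + 2) / (n + 2).factorial) := by
    refine Summable.tsum_le_tsum (fun n => ?_) ?_ ?_
    · rw [mul_pow, show x ^ 2 * (t ^ (n+2) / ((n+2).factorial : ℝ))
        = t ^ (n+2) * x ^ 2 / (n+2).factorial by ring]
      have h0 : (0:ℝ) < ((n+2).factorial : ℝ) := by positivity
      rw [div_le_div_iff₀ h0 h0]
      nlinarith [mul_le_mul_of_nonneg_left (hx2 n)
        (mul_nonneg (pow_nonneg ht (n+2)) h0.le)]
    · exact (summable_nat_add_iff 2).mpr (Real.summable_pow_div_factorial (t * x))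
    · exact (((summable_nat_add_iff 2).mpr (Real.summable_pow_div_factorial t)).mul_left _)
  rw [tsum_mul_left] at hle
  nlinarith [hle, h1, h2]

lemma key2 (p t : ℝ) (hp0 : 0 ≤ p) (hp1 : p ≤ 1) (ht : 0 ≤ t) :
    1 - p + p * Real.exp t
      ≤ Real.exp (t * p + p * (1 - p) * (Real.exp t - 1 - t)) := by
  set A := Real.exp t - 1 - t with hA
  have hA0 : 0 ≤ A := by
    have := Real.add_one_le_exp t
    simp only [hA]; linarith
  have k1 := key1 t (-p) ht (by rw [abs_of_nonpos (by linarith)]; simpa using hp1)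
  have k2 := key1 t (1 - p) ht (abs_le.mpr ⟨by linarith, by linarith⟩)
  have comb : (1 - p) * Real.exp (t * (-p)) + p * Real.exp (t * (1 - p))
      ≤ 1 + p * (1 - p) * A := by nlinarith [k1, k2]
  have h2 : 1 + p * (1 - p) * A ≤ Real.exp (p * (1 - p) * A) := by
    have := Real.add_one_le_exp (p * (1 - p) * A); linarith
  have e1 : Real.exp (t * p) * Real.exp (t * (-p)) = 1 := by
    rw [← Real.exp_add]; norm_num
  have e2 : Real.exp (t * p) * Real.exp (t * (1 - p)) = Real.exp t := by
    rw [← Real.exp_add]; ring_nf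
  have hetp : 0 < Real.exp (t * p) := Real.exp_pos _
  calc 1 - p + p * Real.exp t
      = Real.exp (t * p) * ((1 - p) * Real.exp (t * (-p)) + p * Real.exp (t * (1 - p))) := by
        rw [mul_add, mul_comm ((1:ℝ) - p) _, mul_comm p (Real.exp (t * (1-p)))]
        rw [← mul_assoc, ← mul_assoc, e1, e2]
        ring
    _ ≤ Real.exp (t * p) * (1 + p * (1 - p) * A) :=
        mul_le_mul_of_nonneg_left comb hetp.le
    _ ≤ Real.exp (t * p) * Real.exp (p * (1 - p) * A) :=
        mul_le_mul_of_nonneg_left h2 hetp.le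
    _ = Real.exp (t * p + p * (1 - p) * A) := (Real.exp_add _ _).symm

lemma key3 (t : ℝ) (ht : 0 ≤ t) (ht3 : t < 3) :
    Real.exp t - 1 - t ≤ t ^ 2 / (2 * (1 - t / 3)) := by
  have h2 := exp_sub_linear t
  have hfac : ∀ n : ℕ, (2 * 3 ^ n : ℝ) ≤ (n + 2).factorial := by
    intro n
    induction n with
    | zero => norm_num
    | succ k ih =>
      have h3 : ((k + 3).factorial : ℝ) = (k + 3) * (k + 2).factorial := by
        push_cast [Nat.factorial_succ]; ring
      calc (2 * 3 ^ (k+1) : ℝ) = 3 * (2 * 3 ^ k) := by ring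
        _ ≤ 3 * (k + 2).factorial := by linarith
        _ ≤ (k + 3) * (k + 2).factorial := by
            have : (0:ℝ) ≤ (k + 2).factorial := by positivity
            nlinarith [this]
        _ = ((k + 3).factorial : ℝ) := h3.symm
  have hr : t / 3 < 1 := by linarith
  have hr0 : 0 ≤ t / 3 := by linarith
  have hgeo : ∑' n : ℕ, (t / 3) ^ n = (1 - t / 3)⁻¹ := tsum_geometric_of_lt_one hr0 hr
  have hle : ∑' n : ℕ, t ^ (n + 2) / ((n + 2).factorial : ℝ)
      ≤ ∑' n : ℕ, t ^ 2 / 2 * (t / 3) ^ n := by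
    refine Summable.tsum_le_tsum (fun n => ?_) ?_ ?_
    · have h1 : t ^ 2 / 2 * (t / 3) ^ n = t ^ (n + 2) / (2 * 3 ^ n) := by
        rw [div_pow, pow_add]; ring
      rw [h1]
      apply div_le_div_of_nonneg_left (by positivity) (by positivity) (hfac n)
    · exact (summable_nat_add_iff 2).mpr (Real.summable_pow_div_factorial t)
    · exact (summable_geometric_of_lt_one hr0 hr).mul_left _
  rw [tsum_mul_left, hgeo] at hle
  rw [h2]
  calc ∑' n : ℕ, t ^ (n + 2) / ((n + 2).factorial : ℝ) ≤ t ^ 2 / 2 * (1 - t/3)⁻¹ := hle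
    _ = t ^ 2 / (2 * (1 - t / 3)) := by field_simp

lemma key4 (V ϑ : ℝ) (hV : 0 ≤ V) (hϑ : 0 < ϑ) :
    ∃ t : ℝ, 0 ≤ t ∧
      V * (Real.exp t - 1 - t) - t * ϑ ≤ -(ϑ ^ 2) / (2 * (V + ϑ / 3)) := by
  rcases eq_or_lt_of_le hV with hV0 | hVpos
  · refine ⟨3, by norm_num, ?_⟩
    rw [← hV0]
    have : -(ϑ ^ 2) / (2 * (0 + ϑ / 3)) = -(3 * ϑ / 2) := by
      field_simp; ring
    rw [this]
    nlinarith
  · have hD : 0 < V + ϑ / 3 := by linarith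
    set t := ϑ / (V + ϑ / 3) with htdef
    have ht0 : 0 < t := div_pos hϑ hD
    have ht3 : t < 3 := by
      rw [htdef, div_lt_iff₀ hD]; linarith
    refine ⟨t, ht0.le, ?_⟩
    have hk := key3 t ht0.le ht3
    have h1mt : 1 - t / 3 = V / (V + ϑ / 3) := by
      rw [htdef]; field_simp; ring
    have heq : V * (t ^ 2 / (2 * (1 - t / 3))) - t * ϑ = -(ϑ ^ 2) / (2 * (V + ϑ / 3)) := by
      rw [h1mt, htdef]
      field_simp
      ring
    calc V * (Real.exp t - 1 - t) - t * ϑ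
        ≤ V * (t ^ 2 / (2 * (1 - t / 3))) - t * ϑ := by
          have := mul_le_mul_of_nonneg_left hk hV
          linarith
      _ = -(ϑ ^ 2) / (2 * (V + ϑ / 3)) := heq

section Aux

variable {Ω : Type*} {m0 : MeasurableSpace Ω} (μ : Measure Ω) [IsProbabilityMeasure μ]

lemma integrable_prod_bernoulli {n : ℕ} (Y : Fin n → Ω → ℝ)
    (hmeas : ∀ i, Measurable (Y i)) (hber : ∀ i, ∀ᵐ ω ∂μ, Y i ω = 0 ∨ Y i ω = 1)
    (I : Finset (Fin n)) : Integrable (fun ω => ∏ i ∈ I, Y i ω) μ := by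
  refine (integrable_const (1:ℝ)).mono'
    (Finset.measurable_prod I fun i _ => hmeas i).aestronglyMeasurable ?_
  filter_upwards [ae_all_iff.mpr hber] with ω hω
  have h0 : ∀ i ∈ I, 0 ≤ Y i ω := by
    intro i _; rcases hω i with h | h <;> rw [h] <;> norm_num
  have h1 : ∀ i ∈ I, Y i ω ≤ 1 := by
    intro i _; rcases hω i with h | h <;> rw [h] <;> norm_num
  rw [Real.norm_eq_abs, abs_of_nonneg (Finset.prod_nonneg h0)]
  exact Finset.prod_le_one h0 h1

lemma mgf_sum_bernoulli {n : ℕ} (Y : Fin n → Ω → ℝ)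
    (hmeas : ∀ i, Measurable (Y i)) (hber : ∀ i, ∀ᵐ ω ∂μ, Y i ω = 0 ∨ Y i ω = 1)
    (t : ℝ) :
    mgf (fun ω => ∑ i, Y i ω) μ t
      = ∑ I ∈ (Finset.univ : Finset (Fin n)).powerset,
          (Real.exp t - 1) ^ I.card * ∫ ω, ∏ i ∈ I, Y i ω ∂μ := by
  set c := Real.exp t - 1 with hc
  have hae : ∀ᵐ ω ∂μ, Real.exp (t * ∑ i, Y i ω)
      = ∑ I ∈ (Finset.univ : Finset (Fin n)).powerset,
          c ^ I.card * ∏ i ∈ I, Y i ω := by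
    filter_upwards [ae_all_iff.mpr hber] with ω hω
    have h1 : Real.exp (t * ∑ i, Y i ω) = ∏ i, Real.exp (t * Y i ω) := by
      rw [← Real.exp_sum, Finset.mul_sum]
    have h2 : ∀ i : Fin n, Real.exp (t * Y i ω) = c * Y i ω + 1 := by
      intro i
      rcases hω i with h | h <;> rw [h] <;> simp [hc]
    rw [h1]
    calc ∏ i, Real.exp (t * Y i ω) = ∏ i, (c * Y i ω + 1) := by
          exact Finset.prod_congr rfl fun i _ => h2 i
      _ = ∑ I ∈ (Finset.univ : Finset (Fin n)).powerset,
            (∏ i ∈ I, (c * Y i ω)) * ∏ i ∈ Finset.univ \ I, (1:ℝ) :=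
          Finset.prod_add _ _ _
      _ = ∑ I ∈ (Finset.univ : Finset (Fin n)).powerset,
            c ^ I.card * ∏ i ∈ I, Y i ω := by
          refine Finset.sum_congr rfl fun I _ => ?_
          rw [Finset.prod_const_one, mul_one, Finset.prod_mul_distrib,
            Finset.prod_const]
  rw [mgf, integral_congr_ae hae, integral_finset_sum]
  · exact Finset.sum_congr rfl fun I _ => integral_const_mul _ _
  · intro I _
    exact (integrable_prod_bernoulli μ Y hmeas hber I).const_mul _

end Aux

theorem stmt_5 {Ω : Type*} {m0 : MeasurableSpace Ω} (μ : Measure Ω) [IsProbabilityMeasure μ]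
    (n : ℕ) (X Xhat : Fin n → Ω → ℝ)
    (hXmeas : ∀ i, Measurable (X i)) (hXhmeas : ∀ i, Measurable (Xhat i))
    (hXber : ∀ i, ∀ᵐ ω ∂μ, X i ω = 0 ∨ X i ω = 1)
    (hXhber : ∀ i, ∀ᵐ ω ∂μ, Xhat i ω = 0 ∨ Xhat i ω = 1)
    (hindep : iIndepFun Xhat μ)
    (lam : ℝ) (hlam : 0 < lam)
    (hdom : ∀ I : Finset (Fin n),
      ∫ ω, ∏ i ∈ I, X i ω ∂μ ≤ lam * ∫ ω, ∏ i ∈ I, Xhat i ω ∂μ)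
    (ϑ : ℝ) (hϑ : 0 ≤ ϑ) :
    (μ {ω | ∑ i, X i ω ≥ (∫ ω, ∑ i, Xhat i ω ∂μ) + ϑ}).toReal ≤
      lam * Real.exp (-(ϑ ^ 2) /
        (2 * (variance (fun ω => ∑ i, Xhat i ω) μ + ϑ / 3))) := by
  classical
  have hlam1 : 1 ≤ lam := by simpa using hdom ∅
  -- trivial case ϑ = 0
  rcases eq_or_lt_of_le hϑ with hϑ0 | hϑpos
  · rw [← hϑ0]
    simp only [neg_zero, ne_eq, OfNat.ofNat_ne_zero, not_false_eq_true, zero_pow, neg_zero,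
      zero_div, Real.exp_zero, mul_one]
    calc (μ _).toReal ≤ 1 := by
          rw [← ENNReal.toReal_one]
          exact ENNReal.toReal_mono (by simp) prob_le_one
      _ ≤ lam := hlam1
  -- main case
  · set p : Fin n → ℝ := fun i => ∫ ω, Xhat i ω ∂μ with hpdef
    have hXhint : ∀ i, Integrable (Xhat i) μ := by
      intro i
      refine (integrable_const (1:ℝ)).mono' (hXhmeas i).aestronglyMeasurable ?_
      filter_upwards [hXhber i] with ω hω
      rcases hω with h | h <;> rw [h] <;> norm_num
    have hp0 : ∀ i, 0 ≤ p i := by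
      intro i
      refine integral_nonneg_of_ae ?_
      filter_upwards [hXhber i] with ω hω
      rcases hω with h | h <;> rw [h] <;> norm_num
    have hp1 : ∀ i, p i ≤ 1 := by
      intro i
      have h : ∫ ω, Xhat i ω ∂μ ≤ ∫ _ω, (1:ℝ) ∂μ := by
        refine integral_mono_ae (hXhint i) (integrable_const 1) ?_
        filter_upwards [hXhber i] with ω hω
        rcases hω with h | h <;> rw [h] <;> norm_num
      simpa [hpdef] using h
    have hℒ2 : ∀ i, MemLp (Xhat i) 2 μ := by
      intro i
      refine MemLp.of_bound (hXhmeas i).aestronglyMeasurable 1 ?_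
      filter_upwards [hXhber i] with ω hω
      rcases hω with h | h <;> rw [h] <;> norm_num
    have hfeq : (fun ω => ∑ i, Xhat i ω) = ∑ i, Xhat i := by
      funext ω; simp
    have hE : ∫ ω, ∑ i, Xhat i ω ∂μ = ∑ i, p i :=
      integral_finset_sum _ fun i _ => hXhint i
    have hvari : ∀ i, variance (Xhat i) μ = p i * (1 - p i) := by
      intro i
      rw [variance_eq_sub (hℒ2 i)]
      have hsq : ∫ ω, (Xhat i ^ 2) ω ∂μ = ∫ ω, Xhat i ω ∂μ := by
        refine integral_congr_ae ?_
        filter_upwards [hXhber i] with ω hω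
        rcases hω with h | h <;> simp [Pi.pow_apply, h]
      show (∫ ω, (Xhat i ^ 2) ω ∂μ) - (∫ ω, Xhat i ω ∂μ) ^ 2 = p i * (1 - p i)
      rw [hsq]
      show p i - p i ^ 2 = p i * (1 - p i)
      ring
    have hVar : variance (fun ω => ∑ i, Xhat i ω) μ = ∑ i, p i * (1 - p i) := by
      rw [hfeq, IndepFun.variance_sum (fun i _ => hℒ2 i)
        (fun i _ j _ hij => hindep.indepFun hij)]
      exact Finset.sum_congr rfl fun i _ => hvari i
    set V := variance (fun ω => ∑ i, Xhat i ω) μ with hVdef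
    have hV0 : 0 ≤ V := variance_nonneg _ μ
    obtain ⟨t, ht0, hopt⟩ := key4 V ϑ hV0 hϑpos
    have hc0 : (0:ℝ) ≤ Real.exp t - 1 := by
      nlinarith [Real.add_one_le_exp t, ht0]
    have hmgfXh : ∀ i, mgf (Xhat i) μ t = (Real.exp t - 1) * p i + 1 := by
      intro i
      rw [mgf]
      have heq : ∫ ω, Real.exp (t * Xhat i ω) ∂μ
          = ∫ ω, ((Real.exp t - 1) * Xhat i ω + 1) ∂μ := by
        refine integral_congr_ae ?_
        filter_upwards [hXhber i] with ω hω
        rcases hω with h | h <;> rw [h] <;> simp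
      rw [heq, integral_add ((hXhint i).const_mul _) (integrable_const 1),
        integral_const_mul, integral_const]
      simp [hpdef]
    have hmgfXhat_le : mgf (fun ω => ∑ i, Xhat i ω) μ t
        ≤ Real.exp (t * (∑ i, p i) + V * (Real.exp t - 1 - t)) := by
      rw [hfeq, hindep.mgf_sum hXhmeas]
      calc ∏ i, mgf (Xhat i) μ t
          ≤ ∏ i, Real.exp (t * p i + p i * (1 - p i) * (Real.exp t - 1 - t)) := by
            refine Finset.prod_le_prod (fun i _ => mgf_nonneg) (fun i _ => ?_)
            rw [hmgfXh i]
            calc (Real.exp t - 1) * p i + 1 = 1 - p i + p i * Real.exp t := by ring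
              _ ≤ _ := key2 (p i) t (hp0 i) (hp1 i) ht0
        _ = Real.exp (∑ i, (t * p i + p i * (1 - p i) * (Real.exp t - 1 - t))) :=
            (Real.exp_sum _ _).symm
        _ = Real.exp (t * (∑ i, p i) + V * (Real.exp t - 1 - t)) := by
            rw [hVar]
            congr 1
            rw [Finset.sum_add_distrib, ← Finset.mul_sum, ← Finset.sum_mul]
    have hdommgf : mgf (fun ω => ∑ i, X i ω) μ t
        ≤ lam * mgf (fun ω => ∑ i, Xhat i ω) μ t := by
      rw [mgf_sum_bernoulli μ X hXmeas hXber t,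
        mgf_sum_bernoulli μ Xhat hXhmeas hXhber t, Finset.mul_sum]
      refine Finset.sum_le_sum fun I _ => ?_
      rw [show lam * ((Real.exp t - 1) ^ I.card * ∫ ω, ∏ i ∈ I, Xhat i ω ∂μ)
        = (Real.exp t - 1) ^ I.card * (lam * ∫ ω, ∏ i ∈ I, Xhat i ω ∂μ) by ring]
      exact mul_le_mul_of_nonneg_left (hdom I) (pow_nonneg hc0 _)
    have hint : Integrable (fun ω => Real.exp (t * ∑ i, X i ω)) μ := by
      refine (integrable_const (Real.exp (t * n))).mono'
        ((measurable_const.mul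
          (Finset.measurable_sum _ fun i _ => hXmeas i)).exp).aestronglyMeasurable ?_
      filter_upwards [ae_all_iff.mpr hXber] with ω hω
      rw [Real.norm_eq_abs, Real.abs_exp, Real.exp_le_exp]
      refine mul_le_mul_of_nonneg_left ?_ ht0
      calc ∑ i, X i ω ≤ ∑ _i : Fin n, (1:ℝ) :=
            Finset.sum_le_sum fun i _ => by
              rcases hω i with h | h <;> rw [h] <;> norm_num
        _ = n := by simp
    have hcher := measure_ge_le_exp_mul_mgf (μ := μ) (X := fun ω => ∑ i, X i ω)
      ((∫ ω, ∑ i, Xhat i ω ∂μ) + ϑ) ht0 hint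
    calc (μ {ω | ∑ i, X i ω ≥ (∫ ω, ∑ i, Xhat i ω ∂μ) + ϑ}).toReal
        ≤ Real.exp (-t * ((∫ ω, ∑ i, Xhat i ω ∂μ) + ϑ))
            * mgf (fun ω => ∑ i, X i ω) μ t := hcher
      _ ≤ Real.exp (-t * ((∫ ω, ∑ i, Xhat i ω ∂μ) + ϑ))
            * (lam * mgf (fun ω => ∑ i, Xhat i ω) μ t) :=
          mul_le_mul_of_nonneg_left hdommgf (Real.exp_pos _).le
      _ ≤ Real.exp (-t * ((∫ ω, ∑ i, Xhat i ω ∂μ) + ϑ))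
            * (lam * Real.exp (t * (∑ i, p i) + V * (Real.exp t - 1 - t))) :=
          mul_le_mul_of_nonneg_left
            (mul_le_mul_of_nonneg_left hmgfXhat_le (by linarith)) (Real.exp_pos _).le
      _ = lam * Real.exp (V * (Real.exp t - 1 - t) - t * ϑ) := by
          rw [show Real.exp (-t * ((∫ ω, ∑ i, Xhat i ω ∂μ) + ϑ))
              * (lam * Real.exp (t * (∑ i, p i) + V * (Real.exp t - 1 - t)))
            = lam * (Real.exp (-t * ((∫ ω, ∑ i, Xhat i ω ∂μ) + ϑ))
              * Real.exp (t * (∑ i, p i) + V * (Real.exp t - 1 - t))) by ring,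
            ← Real.exp_add, hE]
          congr 1
          ring
      _ ≤ lam * Real.exp (-(ϑ ^ 2) / (2 * (V + ϑ / 3))) :=
          mul_le_mul_of_nonneg_left (Real.exp_le_exp.mpr hopt) (by linarith)
end

section
/- Fix integers $k \geq 2$, $r \geq 2$, reals $n > 0$, $p \in (0,1)$, $\eta > 0$, $\delta > 0$, and $c_0 > 0$. Define sequences $(c(t))_{t \geq -1}$ and $(c_i(t))_{t \geq 0}$ for $0 \leq i \leq r$ by: $c(-1) = 0$, $c(0) = c_0$, $c_0(t) = n$ for all $t$, $c_i(0) = 0$ for $1 \leq i \leq r$, and for $t \geq 0$: $c_i(t+1) = \sum_{j=0}^{i-1} c_j(t)\frac{(c(t)-c(t-1))^{i-j}}{(i-j)!}q^{i-j} + c_i(t)$ for $1 \leq i \leq r-1$, $c_r(t+1) = (1-\delta)\sum_{j=0}^{r-1} c_j(t)\frac{(c(t)-c(t-1))^{r-j}}{(r-j)!}q^{r-j} + c_r(t)$, and $c(t+1) = \eta\, c_r(t+1) + c(0)$, where $q = \binom{n}{k-2}p$. Then for all $t \geq -1$: $c_i(t+1) = \frac{c(t)^i}{i!} n q^i$ for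 $0 \leq i < r$, $c_r(t+1) = (1-\delta)\frac{c(t)^r}{r!} n q^r$, and $c(t+1) = (1-\delta)\eta \frac{c(t)^r}{r!} n q^r + c(0)$. -/
lemma binom_key (x y n q : ℝ) (i : ℕ) :
    (∑ j ∈ Finset.range i, (y ^ j / (j.factorial : ℝ) * n * q ^ j) * (x - y) ^ (i - j) /
      ((i - j).factorial : ℝ) * q ^ (i - j)) + y ^ i / (i.factorial : ℝ) * n * q ^ i
    = x ^ i / (i.factorial : ℝ) * n * q ^ i := by
  have hx : x = y + (x - y) := by ring
  have hsum : x ^ i = ∑ j ∈ Finset.range (i + 1),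
      y ^ j * (x - y) ^ (i - j) * (i.choose j : ℝ) := by
    conv_lhs => rw [hx, add_pow]
  rw [hsum, Finset.sum_div, Finset.sum_mul, Finset.sum_mul]
  rw [Finset.sum_range_succ]
  congr 1
  · apply Finset.sum_congr rfl
    intro j hj
    have hji : j ≤ i := le_of_lt (Finset.mem_range.mp hj)
    have hq : q ^ j * q ^ (i - j) = q ^ i := by
      rw [← pow_add]; congr 1; omega
    have hch : ((i.choose j : ℝ)) * (j.factorial : ℝ) * ((i - j).factorial : ℝ) = (i.factorial : ℝ) := by
      exact_mod_cast congrArg (Nat.cast : ℕ → ℝ) (Nat.choose_mul_factorial_mul_factorial hji)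
    have h1 : (j.factorial : ℝ) ≠ 0 := Nat.cast_ne_zero.mpr j.factorial_ne_zero
    have h2 : ((i - j).factorial : ℝ) ≠ 0 := Nat.cast_ne_zero.mpr (i - j).factorial_ne_zero
    have h3 : (i.factorial : ℝ) ≠ 0 := Nat.cast_ne_zero.mpr i.factorial_ne_zero
    field_simp
    rw [← hq, ← hch]
    ring
  · simp
theorem stmt_13 (k r : ℕ) (hk : 2 ≤ k) (hr : 2 ≤ r)
    (n p η δ c0 : ℝ) (hn : 0 < n) (hp0 : 0 < p) (hp1 : p < 1)
    (hη : 0 < η) (hδ : 0 < δ) (hc0 : 0 < c0)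
    (q : ℝ) (hq : 0 < q)
    (c : ℤ → ℝ) (ci : ℕ → ℤ → ℝ)
    (hcm1 : c (-1) = 0) (hc00 : c 0 = c0)
    (hci0 : ∀ t : ℤ, ci 0 t = n)
    (hciinit : ∀ i : ℕ, 1 ≤ i → i ≤ r → ci i 0 = 0)
    (hcirec : ∀ i : ℕ, 1 ≤ i → i ≤ r - 1 → ∀ t : ℤ, 0 ≤ t →
      ci i (t + 1) = (∑ j ∈ Finset.range i,
        ci j t * (c t - c (t - 1)) ^ (i - j) / ((i - j).factorial : ℝ) * q ^ (i - j)) + ci i t)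
    (hcrrec : ∀ t : ℤ, 0 ≤ t →
      ci r (t + 1) = (1 - δ) * (∑ j ∈ Finset.range r,
        ci j t * (c t - c (t - 1)) ^ (r - j) / ((r - j).factorial : ℝ) * q ^ (r - j)) + ci r t)
    (hcrec : ∀ t : ℤ, 0 ≤ t → c (t + 1) = η * ci r (t + 1) + c 0) :
    ∀ t : ℤ, -1 ≤ t →
      (∀ i : ℕ, i < r → ci i (t + 1) = c t ^ i / (i.factorial : ℝ) * n * q ^ i) ∧
      ci r (t + 1) = (1 - δ) * c t ^ r / (r.factorial : ℝ) * n * q ^ r ∧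
      c (t + 1) = (1 - δ) * η * c t ^ r / (r.factorial : ℝ) * n * q ^ r + c 0 := by
  intro t ht
  refine Int.le_induction (m := -1)
    (motive := fun s _ => (∀ i : ℕ, i < r → ci i (s + 1) = c s ^ i / (i.factorial : ℝ) * n * q ^ i) ∧
      ci r (s + 1) = (1 - δ) * c s ^ r / (r.factorial : ℝ) * n * q ^ r ∧
      c (s + 1) = (1 - δ) * η * c s ^ r / (r.factorial : ℝ) * n * q ^ r + c 0)
    ?base ?step t ht
  case base =>
    refine ⟨?_, ?_, ?_⟩
    · intro i hi
      rcases Nat.eq_zero_or_pos i with h0 | h0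
      · subst h0; simp [hci0, hcm1]
      · rw [show (-1 : ℤ) + 1 = 0 by ring, hciinit i h0 (le_of_lt hi), hcm1,
          zero_pow (by omega : i ≠ 0)]
        ring
    · rw [show (-1 : ℤ) + 1 = 0 by ring, hciinit r (by omega) le_rfl, hcm1,
        zero_pow (by omega : r ≠ 0)]
      ring
    · rw [show (-1 : ℤ) + 1 = 0 by ring, hcm1, zero_pow (by omega : r ≠ 0)]
      ring
  case step =>
    intro t ht ih
    obtain ⟨ih1, ih2, ih3⟩ := ih
    have ht1 : (0 : ℤ) ≤ t + 1 := by omega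
    have hsub : t + 1 - 1 = t := by ring
    have hlt : ∀ i : ℕ, i < r →
        ci i (t + 1 + 1) = c (t + 1) ^ i / (i.factorial : ℝ) * n * q ^ i := by
      intro i hi
      rcases Nat.eq_zero_or_pos i with h0 | h0
      · subst h0; simp [hci0]
      · rw [hcirec i h0 (by omega) (t + 1) ht1, hsub]
        have hterm : ∀ j ∈ Finset.range i,
            ci j (t + 1) * (c (t + 1) - c t) ^ (i - j) / ((i - j).factorial : ℝ) * q ^ (i - j)
            = (c t ^ j / (j.factorial : ℝ) * n * q ^ j) * (c (t + 1) - c t) ^ (i - j) /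
              ((i - j).factorial : ℝ) * q ^ (i - j) := by
          intro j hj
          rw [ih1 j (by have := Finset.mem_range.mp hj; omega)]
        rw [Finset.sum_congr rfl hterm, ih1 i hi, binom_key]
    refine ⟨hlt, ?_, ?_⟩
    · rw [hcrrec (t + 1) ht1, hsub]
      have hterm : ∀ j ∈ Finset.range r,
          ci j (t + 1) * (c (t + 1) - c t) ^ (r - j) / ((r - j).factorial : ℝ) * q ^ (r - j)
          = (c t ^ j / (j.factorial : ℝ) * n * q ^ j) * (c (t + 1) - c t) ^ (r - j) /
            ((r - j).factorial : ℝ) * q ^ (r - j) := by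
        intro j hj
        rw [ih1 j (Finset.mem_range.mp hj)]
      rw [Finset.sum_congr rfl hterm, ih2]
      have := binom_key (c (t + 1)) (c t) n q r
      linear_combination (1 - δ) * this
    · rw [hcrec (t + 1) ht1, hcrrec (t + 1) ht1, hsub]
      have hterm : ∀ j ∈ Finset.range r,
          ci j (t + 1) * (c (t + 1) - c t) ^ (r - j) / ((r - j).factorial : ℝ) * q ^ (r - j)
          = (c t ^ j / (j.factorial : ℝ) * n * q ^ j) * (c (t + 1) - c t) ^ (r - j) /
            ((r - j).factorial : ℝ) * q ^ (r - j) := by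
        intro j hj
        rw [ih1 j (Finset.mem_range.mp hj)]
      rw [Finset.sum_congr rfl hterm, ih2]
      have := binom_key (c (t + 1)) (c t) n q r
      linear_combination η * (1 - δ) * this
end
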